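/- arXiv:1907.05778 — 2 statements merged into one kernel-verified Lean document; each statement's English description precedes it below -/
import Mathlib

section
/- Let x : ℝ → ℝ^d be a C² NT-periodic solution of M·ẍ + C·ẋ + K·x = −∇U(x) + f(t) with M, C, K symmetric, C positive definite with y·Cy ≥ C_min|y|², and f continuously differentiable and NT-periodic. Then C_min·‖ẋ‖²_{L²(0,NT)} ≤ ‖ḟ‖_{L^{r*}(0,NT)}·‖x‖_{L^r(0,NT)} for any r > 1 with r* = r/(r−1). -/
/-!
Along a solution, the energy `½⟪M x', x'⟫ + ½⟪K x, x⟫ + U(x) - ⟪f, x⟫` has derivative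
`-⟪x', C x'⟫ - ⟪f', x⟫` (symmetry of `M` and `K`). It is periodic, so integrating over a period
gives `∫ ⟪x', C x'⟫ = -∫ ⟪f', x⟫`; coercivity of `C` bounds the left side below by
`Cmin ‖x'‖₂²`, and Cauchy–Schwarz followed by Hölder bounds the right side.
-/

open MeasureTheory intervalIntegral

noncomputable def mv {d : ℕ} (M : Matrix (Fin d) (Fin d) ℝ)
    (v : EuclideanSpace ℝ (Fin d)) : EuclideanSpace ℝ (Fin d) :=
  WithLp.toLp 2 (M.mulVec v)

open scoped RealInnerProductSpace

theorem Matrix.IsSymm.isSymmetric_toEuclideanCLM {n : Type*} [Fintype n] [DecidableEq n]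
    {A : Matrix n n ℝ} (hA : A.IsSymm) : (Matrix.toEuclideanCLM (𝕜 := ℝ) A).IsSymmetric := by
  rw [Matrix.coe_toEuclideanCLM_eq_toEuclideanLin, Matrix.isSymmetric_toEuclideanLin_iff]
  exact Matrix.isHermitian_iff_isSelfAdjoint.mpr hA

theorem Function.Periodic.deriv {F : Type*} [NormedAddCommGroup F] [NormedSpace ℝ F]
    {g : ℝ → F} {c : ℝ} (hg : g.Periodic c) : (deriv g).Periodic c := fun t => by
  rw [← deriv_comp_add_const, funext hg]

theorem intervalIntegral.integral_mul_le_Lp_mul_Lq_of_nonneg {p q : ℝ}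
    (hpq : p.HolderConjugate q) {a b : ℝ} (hab : a ≤ b) {g h : ℝ → ℝ} (hg0 : ∀ t, 0 ≤ g t)
    (hh0 : ∀ t, 0 ≤ h t) (hg : Continuous g) (hh : Continuous h) :
    ∫ t in a..b, g t * h t ≤
      (∫ t in a..b, g t ^ p) ^ (1 / p) * (∫ t in a..b, h t ^ q) ^ (1 / q) := by
  simp only [integral_of_le hab]
  have memLp {u : ℝ → ℝ} (hu : Continuous u) (r : ℝ) :
      MemLp u (ENNReal.ofReal r) (volume.restrict (Set.Ioc a b)) := by
    obtain ⟨B, hB⟩ := (isCompact_Icc (a := a) (b := b)).exists_bound_of_continuousOn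
      hu.continuousOn
    exact MemLp.of_bound hu.aestronglyMeasurable B
      ((ae_restrict_iff' measurableSet_Ioc).mpr
        (ae_of_all _ fun t ht => hB t (Set.Ioc_subset_Icc_self ht)))
  have : IsFiniteMeasure (volume.restrict (Set.Ioc a b)) := by
    rw [isFiniteMeasure_restrict]; exact measure_Ioc_lt_top.ne
  exact MeasureTheory.integral_mul_le_Lp_mul_Lq_of_nonneg hpq (ae_of_all _ hg0) (ae_of_all _ hh0)
    (memLp hg p) (memLp hh q)

section DampedOscillator

variable {E : Type*} [NormedAddCommGroup E] [InnerProductSpace ℝ E]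

theorem HasDerivAt.half_inner_apply_self {A : E →L[ℝ] E} (hA : A.IsSymmetric) {u : ℝ → E}
    {u' : E} {t : ℝ} (hu : HasDerivAt u u' t) :
    HasDerivAt (fun s => (1 / 2 : ℝ) * ⟪A (u s), u s⟫) ⟪u t, A u'⟫ t := by
  refine (((A.hasFDerivAt.comp_hasDerivAt t hu).inner ℝ hu).const_mul (1 / 2 : ℝ)).congr_deriv ?_
  have hsymm : ⟪A (u t), u'⟫ = ⟪u t, A u'⟫ := hA _ _
  simp only [Function.comp_apply, hsymm, real_inner_comm (A u')]
  ring

theorem HasGradientAt.comp_hasDerivAt [CompleteSpace E] {U : E → ℝ} {g : E} {u : ℝ → E}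
    {u' : E} {t : ℝ} (hU : HasGradientAt U g (u t)) (hu : HasDerivAt u u' t) :
    HasDerivAt (U ∘ u) ⟪g, u'⟫ t := by
  simpa using (hasGradientAt_iff_hasFDerivAt.mp hU).comp_hasDerivAt t hu

-- The forcing enters as the time-dependent potential `-⟪f t, x⟫`.
noncomputable def oscillatorEnergy (M K : E →L[ℝ] E) (U : E → ℝ) (f x : ℝ → E) (t : ℝ) : ℝ :=
  (1 / 2) * ⟪M (deriv x t), deriv x t⟫ + (1 / 2) * ⟪K (x t), x t⟫ + U (x t) - ⟪f t, x t⟫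

variable {M C K : E →L[ℝ] E} {U : E → ℝ} {f x : ℝ → E}

theorem Function.Periodic.oscillatorEnergy {c : ℝ} (hx : x.Periodic c) (hf : f.Periodic c) :
    (oscillatorEnergy M K U f x).Periodic c := fun t => by
  simp only [_root_.oscillatorEnergy, hx t, hx.deriv t, hf t]

variable [CompleteSpace E]

theorem hasDerivAt_oscillatorEnergy (hM : M.IsSymmetric) (hK : K.IsSymmetric) {t : ℝ}
    (hU : DifferentiableAt ℝ U (x t)) (hx : DifferentiableAt ℝ x t)
    (hx' : DifferentiableAt ℝ (deriv x) t) (hf : DifferentiableAt ℝ f t)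
    (hode : M (deriv (deriv x) t) + C (deriv x t) + K (x t) = -gradient U (x t) + f t) :
    HasDerivAt (oscillatorEnergy M K U f x)
      (-⟪deriv x t, C (deriv x t)⟫ - ⟪deriv f t, x t⟫) t := by
  have hkinetic := hx'.hasDerivAt.half_inner_apply_self hM
  have hpotential := hx.hasDerivAt.half_inner_apply_self hK
  have hU' := hU.hasGradientAt.comp_hasDerivAt hx.hasDerivAt
  have hforcing := hf.hasDerivAt.inner ℝ hx.hasDerivAt
  refine (((hkinetic.add hpotential).add hU').sub hforcing).congr_deriv ?_
  have hpower := congrArg (⟪deriv x t, ·⟫) hode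
  have hsymm : ⟪x t, K (deriv x t)⟫ = ⟪deriv x t, K (x t)⟫ :=
    (hK _ _).symm.trans (real_inner_comm _ _)
  simp only [inner_add_right, inner_neg_right] at hpower
  rw [hsymm, real_inner_comm (deriv x t) (gradient U (x t)), real_inner_comm (deriv x t) (f t)]
  linarith

theorem integral_inner_damping_eq_neg_integral_inner_deriv_forcing (hM : M.IsSymmetric)
    (hK : K.IsSymmetric) (hU : Differentiable ℝ U) (hx : ContDiff ℝ 2 x) (hf : ContDiff ℝ 1 f)
    {c : ℝ} (hxper : x.Periodic c) (hfper : f.Periodic c)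
    (hode : ∀ t, M (deriv (deriv x) t) + C (deriv x t) + K (x t) = -gradient U (x t) + f t)
    (a : ℝ) :
    ∫ t in a..a + c, ⟪deriv x t, C (deriv x t)⟫ = -∫ t in a..a + c, ⟪deriv f t, x t⟫ := by
  have hx' : ContDiff ℝ 1 (deriv x) := hx.iterate_deriv' 1 1
  have hdamping : Continuous fun t => ⟪deriv x t, C (deriv x t)⟫ := by
    have := hx'.continuous; fun_prop
  have hforcing : Continuous fun t => ⟪deriv f t, x t⟫ :=
    (hf.continuous_deriv le_rfl).inner hx.continuous
  have hbalance := integral_eq_sub_of_hasDerivAt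
    (fun t _ => hasDerivAt_oscillatorEnergy hM hK (hU _) (hx.differentiable two_ne_zero t)
      (hx'.differentiable one_ne_zero t) (hf.differentiable one_ne_zero t) (hode t))
    ((hdamping.neg.sub hforcing).intervalIntegrable a (a + c))
  rw [(hxper.oscillatorEnergy hfper) a, sub_self,
    integral_sub (f := fun t => -⟪deriv x t, C (deriv x t)⟫) (hdamping.neg.intervalIntegrable _ _)
      (hforcing.intervalIntegrable _ _), intervalIntegral.integral_neg] at hbalance
  linarith

theorem mul_integral_norm_deriv_sq_le_integral_norm_deriv_mul_norm (hM : M.IsSymmetric)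
    (hK : K.IsSymmetric) (hU : Differentiable ℝ U) (hx : ContDiff ℝ 2 x) (hf : ContDiff ℝ 1 f)
    {c : ℝ} (hc : 0 ≤ c) (hxper : x.Periodic c) (hfper : f.Periodic c)
    (hode : ∀ t, M (deriv (deriv x) t) + C (deriv x t) + K (x t) = -gradient U (x t) + f t)
    {Cmin : ℝ} (hC : ∀ y, Cmin * ‖y‖ ^ 2 ≤ ⟪y, C y⟫) (a : ℝ) :
    Cmin * ∫ t in a..a + c, ‖deriv x t‖ ^ 2 ≤ ∫ t in a..a + c, ‖deriv f t‖ * ‖x t‖ := by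
  have hac : a ≤ a + c := le_add_of_nonneg_right hc
  have hx' : Continuous (deriv x) := hx.continuous_deriv one_le_two
  have hf' : Continuous (deriv f) := hf.continuous_deriv le_rfl
  have hxc : Continuous x := hx.continuous
  calc Cmin * ∫ t in a..a + c, ‖deriv x t‖ ^ 2
      = ∫ t in a..a + c, Cmin * ‖deriv x t‖ ^ 2 := (intervalIntegral.integral_const_mul ..).symm
    _ ≤ ∫ t in a..a + c, ⟪deriv x t, C (deriv x t)⟫ :=
      integral_mono_on hac (Continuous.intervalIntegrable (by fun_prop) _ _)
        (Continuous.intervalIntegrable (by fun_prop) _ _) fun t _ => hC _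
    _ = ∫ t in a..a + c, -⟪deriv f t, x t⟫ := by
      rw [intervalIntegral.integral_neg]
      exact integral_inner_damping_eq_neg_integral_inner_deriv_forcing hM hK hU hx hf hxper hfper
        hode a
    _ ≤ ∫ t in a..a + c, ‖deriv f t‖ * ‖x t‖ :=
      integral_mono_on hac (Continuous.intervalIntegrable (by fun_prop) _ _)
        (Continuous.intervalIntegrable (by fun_prop) _ _) fun t _ =>
          (neg_le_abs _).trans (abs_real_inner_le_norm _ _)

end DampedOscillator

theorem stmt_15_general {d : ℕ} (N : ℕ) (T : ℝ) (hT : 0 < T)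
    (M C K : Matrix (Fin d) (Fin d) ℝ) (hMs : M.IsSymm) (hKs : K.IsSymm)
    (Cmin : ℝ)
    (hC : ∀ y : EuclideanSpace ℝ (Fin d), Cmin * ‖y‖ ^ 2 ≤ (inner ℝ y (mv C y) : ℝ))
    (U : EuclideanSpace ℝ (Fin d) → ℝ) (hU : ContDiff ℝ 1 U)
    (f : ℝ → EuclideanSpace ℝ (Fin d)) (hf : ContDiff ℝ 1 f)
    (hfper : Function.Periodic f (N * T))
    (x : ℝ → EuclideanSpace ℝ (Fin d)) (hx : ContDiff ℝ 2 x)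
    (hxper : Function.Periodic x (N * T))
    (hode : ∀ t : ℝ, mv M (deriv (deriv x) t) + mv C (deriv x t) + mv K (x t)
      = -gradient U (x t) + f t)
    (r rstar : ℝ) (hr : 1 < r) (hrstar : rstar = r / (r - 1)) :
    Cmin * ∫ t in (0:ℝ)..(N * T), ‖deriv x t‖ ^ 2
      ≤ (∫ t in (0:ℝ)..(N * T), ‖deriv f t‖ ^ rstar) ^ (1 / rstar)
        * (∫ t in (0:ℝ)..(N * T), ‖x t‖ ^ r) ^ (1 / r) := by
  -- `mv A` is `Matrix.toEuclideanCLM A` by definition, so `hC` and `hode` apply as they stand.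
  have hestimate := mul_integral_norm_deriv_sq_le_integral_norm_deriv_mul_norm
    (C := Matrix.toEuclideanCLM (𝕜 := ℝ) C) hMs.isSymmetric_toEuclideanCLM
    hKs.isSymmetric_toEuclideanCLM (hU.differentiable one_ne_zero) hx hf (by positivity) hxper
    hfper hode hC 0
  rw [zero_add] at hestimate
  have hholder : rstar.HolderConjugate r :=
    ((Real.holderConjugate_iff_eq_conjExponent hr).mpr hrstar).symm
  exact hestimate.trans <| intervalIntegral.integral_mul_le_Lp_mul_Lq_of_nonneg hholder
    (by positivity) (fun _ => norm_nonneg _) (fun _ => norm_nonneg _)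
    (hf.continuous_deriv le_rfl).norm hx.continuous.norm

theorem stmt_15 {d : ℕ} (N : ℕ) (T : ℝ) (hN : 1 ≤ N) (hT : 0 < T)
    (M C K : Matrix (Fin d) (Fin d) ℝ) (hMs : M.IsSymm) (hCs : C.IsSymm) (hKs : K.IsSymm)
    (Cmin : ℝ) (hCmin : 0 < Cmin)
    (hC : ∀ y : EuclideanSpace ℝ (Fin d), Cmin * ‖y‖ ^ 2 ≤ (inner ℝ y (mv C y) : ℝ))
    (U : EuclideanSpace ℝ (Fin d) → ℝ) (hU : ContDiff ℝ 1 U)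
    (f : ℝ → EuclideanSpace ℝ (Fin d)) (hf : ContDiff ℝ 1 f)
    (hfper : Function.Periodic f (N * T))
    (x : ℝ → EuclideanSpace ℝ (Fin d)) (hx : ContDiff ℝ 2 x)
    (hxper : Function.Periodic x (N * T))
    (hode : ∀ t : ℝ, mv M (deriv (deriv x) t) + mv C (deriv x t) + mv K (x t)
      = -gradient U (x t) + f t)
    (r rstar : ℝ) (hr : 1 < r) (hrstar : rstar = r / (r - 1)) :
    Cmin * ∫ t in (0:ℝ)..(N * T), ‖deriv x t‖ ^ 2
      ≤ (∫ t in (0:ℝ)..(N * T), ‖deriv f t‖ ^ rstar) ^ (1 / rstar)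
        * (∫ t in (0:ℝ)..(N * T), ‖x t‖ ^ r) ^ (1 / r) :=
  stmt_15_general N T hT M C K hMs hKs Cmin hC U hU f hf hfper x hx hxper hode r rstar hr hrstar
end

section
/- Let x : ℝ → ℝ^d be a C² NT-periodic solution of M·ẍ + C·ẋ + K·x = −∇U(x) + f(t), where f is C² and NT-periodic and M, C, K are symmetric. If |∇U(z)| ≤ U₀ for all z in a set containing the range of x, then ∫₀^{NT}|f(t)|² dt ≤ U₀·∫₀^{NT}|f(t)| dt + ∫₀^{NT} |M·f̈(t) − C·ḟ(t) + K·f(t)|·|x(t)| dt. -/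
open MeasureTheory intervalIntegral

section aux

variable {d : ℕ}

local notation "E" => EuclideanSpace ℝ (Fin d)

lemma inner_mv_symm (M : Matrix (Fin d) (Fin d) ℝ) (h : M.IsSymm)
    (u v : E) : (inner ℝ (mv M u) v : ℝ) = inner ℝ u (mv M v) := by
  simp only [mv, PiLp.inner_apply, RCLike.inner_apply, starRingEnd_apply, star_trivial,
    Matrix.mulVec, dotProduct, Finset.sum_mul, Finset.mul_sum]
  rw [Finset.sum_comm]
  refine Finset.sum_congr rfl fun i _ => Finset.sum_congr rfl fun j _ => ?_
  rw [← h.apply i j]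
  ring

noncomputable def mvL (M : Matrix (Fin d) (Fin d) ℝ) : E →L[ℝ] E :=
  LinearMap.toContinuousLinearMap (Matrix.toEuclideanLin M)

lemma mvL_apply (M : Matrix (Fin d) (Fin d) ℝ) (v : E) : mvL M v = mv M v := rfl

lemma contDiff_mv {n : ℕ∞} (M : Matrix (Fin d) (Fin d) ℝ) {g : ℝ → E}
    (hg : ContDiff ℝ n g) : ContDiff ℝ n (fun t => mv M (g t)) :=
  (mvL M).contDiff.comp hg

lemma deriv_mv (M : Matrix (Fin d) (Fin d) ℝ) {g : ℝ → E}
    (hg : Differentiable ℝ g) (t : ℝ) :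
    deriv (fun s => mv M (g s)) t = mv M (deriv g t) := by
  have := ((mvL M).hasFDerivAt (x := g t)).comp_hasDerivAt t (hg t).hasDerivAt
  exact this.deriv

lemma periodic_deriv {F : Type*} [NormedAddCommGroup F] [NormedSpace ℝ F]
    {g : ℝ → F} {c : ℝ} (h : Function.Periodic g c) :
    Function.Periodic (deriv g) c := by
  intro t
  have : (fun s => g (s + c)) = g := funext fun s => h s
  rw [← deriv_comp_add_const g c t, this]

lemma ibp (L : ℝ) (u v : ℝ → E) (hu : ContDiff ℝ 1 u) (hv : ContDiff ℝ 1 v)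
    (hper : (inner ℝ (u L) (v L) : ℝ) = inner ℝ (u 0) (v 0)) :
    ∫ t in (0:ℝ)..L, (inner ℝ (deriv u t) (v t) : ℝ)
      = - ∫ t in (0:ℝ)..L, (inner ℝ (u t) (deriv v t) : ℝ) := by
  have hud := hu.differentiable one_ne_zero
  have hvd := hv.differentiable one_ne_zero
  have hD : ∀ t : ℝ, HasDerivAt (fun s => (inner ℝ (u s) (v s) : ℝ))
      ((inner ℝ (u t) (deriv v t) : ℝ) + inner ℝ (deriv u t) (v t)) t := fun t =>
    (hud t).hasDerivAt.inner ℝ (hvd t).hasDerivAt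
  have hc1 : Continuous fun t => (inner ℝ (u t) (deriv v t) : ℝ) :=
    (hu.continuous).inner (hv.continuous_deriv le_rfl)
  have hc2 : Continuous fun t => (inner ℝ (deriv u t) (v t) : ℝ) :=
    (hu.continuous_deriv le_rfl).inner hv.continuous
  have hint : IntervalIntegrable
      (fun t => (inner ℝ (u t) (deriv v t) : ℝ) + inner ℝ (deriv u t) (v t))
      volume 0 L := ((hc1.add hc2)).intervalIntegrable _ _
  have h0 : (∫ t in (0:ℝ)..L,
      ((inner ℝ (u t) (deriv v t) : ℝ) + inner ℝ (deriv u t) (v t))) = 0 := by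
    rw [intervalIntegral.integral_eq_sub_of_hasDerivAt (fun t _ => hD t) hint, hper, sub_self]
  rw [intervalIntegral.integral_add (hc1.intervalIntegrable _ _)
    (hc2.intervalIntegrable _ _)] at h0
  linarith

end aux

theorem stmt_16 {d : ℕ} (N : ℕ) (T : ℝ) (hN : 1 ≤ N) (hT : 0 < T)
    (M C K : Matrix (Fin d) (Fin d) ℝ) (hMs : M.IsSymm) (hCs : C.IsSymm) (hKs : K.IsSymm)
    (U : EuclideanSpace ℝ (Fin d) → ℝ) (hU : ContDiff ℝ 1 U)
    (f : ℝ → EuclideanSpace ℝ (Fin d)) (hf : ContDiff ℝ 2 f)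
    (hfper : Function.Periodic f (N * T))
    (x : ℝ → EuclideanSpace ℝ (Fin d)) (hx : ContDiff ℝ 2 x)
    (hxper : Function.Periodic x (N * T))
    (U₀ : ℝ) (hU₀ : ∀ t : ℝ, ‖gradient U (x t)‖ ≤ U₀)
    (hode : ∀ t : ℝ, mv M (deriv (deriv x) t) + mv C (deriv x t) + mv K (x t)
      = -gradient U (x t) + f t) :
    (∫ t in (0:ℝ)..(N * T), ‖f t‖ ^ 2)
      ≤ U₀ * (∫ t in (0:ℝ)..(N * T), ‖f t‖)
        + ∫ t in (0:ℝ)..(N * T),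
            ‖mv M (deriv (deriv f) t) - mv C (deriv f t) + mv K (f t)‖ * ‖x t‖ := by
  have hL0 : (0:ℝ) ≤ N * T := by
    have h1 : (1:ℝ) ≤ (N:ℝ) := by exact_mod_cast hN
    nlinarith
  -- smoothness bookkeeping
  have hf2 : ContDiff ℝ ((1:WithTop ℕ∞)+1) f := by
    rw [show (1:WithTop ℕ∞)+1 = 2 from by norm_num]; exact hf
  have hf' : ContDiff ℝ 1 (deriv f) := (contDiff_succ_iff_deriv.mp hf2).2.2
  have hx2 : ContDiff ℝ ((1:WithTop ℕ∞)+1) x := by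
    rw [show (1:WithTop ℕ∞)+1 = 2 from by norm_num]; exact hx
  have hx' : ContDiff ℝ 1 (deriv x) := (contDiff_succ_iff_deriv.mp hx2).2.2
  have hf1 : ContDiff ℝ 1 f := hf.of_le one_le_two
  have hx1 : ContDiff ℝ 1 x := hx.of_le one_le_two
  have hfc : Continuous f := hf.continuous
  have hxc : Continuous x := hx.continuous
  have hf'c : Continuous (deriv f) := hf'.continuous
  have hx'c : Continuous (deriv x) := hx'.continuous
  have hf''c : Continuous (deriv (deriv f)) := hf'.continuous_deriv le_rfl
  have hx''c : Continuous (deriv (deriv x)) := hx'.continuous_deriv le_rfl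
  have hfd : Differentiable ℝ f := hf1.differentiable one_ne_zero
  have hxd : Differentiable ℝ x := hx1.differentiable one_ne_zero
  have hf'd : Differentiable ℝ (deriv f) := hf'.differentiable one_ne_zero
  have hx'd : Differentiable ℝ (deriv x) := hx'.differentiable one_ne_zero
  have hgc : Continuous (fun t => gradient U (x t)) := by
    have h1 : Continuous (fderiv ℝ U) := hU.continuous_fderiv one_ne_zero
    exact ((InnerProductSpace.toDual ℝ _).symm.continuous.comp h1).comp hxc
  -- periodic boundary values
  have pf : f (N * T) = f 0 := by simpa using hfper 0
  have pf' : deriv f (N * T) = deriv f 0 := by simpa using (periodic_deriv hfper) 0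
  have px : x (N * T) = x 0 := by simpa using hxper 0
  have px' : deriv x (N * T) = deriv x 0 := by simpa using (periodic_deriv hxper) 0
  -- integrability of all pieces
  have cMx'' : Continuous (fun t => mv M (deriv (deriv x) t)) := (mvL M).continuous.comp hx''c
  have cCx' : Continuous (fun t => mv C (deriv x t)) := (mvL C).continuous.comp hx'c
  have cKx : Continuous (fun t => mv K (x t)) := (mvL K).continuous.comp hxc
  have cMf'' : Continuous (fun t => mv M (deriv (deriv f) t)) := (mvL M).continuous.comp hf''c
  have cCf' : Continuous (fun t => mv C (deriv f t)) := (mvL C).continuous.comp hf'c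
  have cKf : Continuous (fun t => mv K (f t)) := (mvL K).continuous.comp hfc
  have hi1 : IntervalIntegrable (fun t => (inner ℝ (f t) (mv M (deriv (deriv x) t)) : ℝ))
      volume 0 (N*T) := (hfc.inner cMx'').intervalIntegrable _ _
  have hi2 : IntervalIntegrable (fun t => (inner ℝ (f t) (mv C (deriv x t)) : ℝ))
      volume 0 (N*T) := (hfc.inner cCx').intervalIntegrable _ _
  have hi3 : IntervalIntegrable (fun t => (inner ℝ (f t) (mv K (x t)) : ℝ))
      volume 0 (N*T) := (hfc.inner cKx).intervalIntegrable _ _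
  have hi4 : IntervalIntegrable (fun t => (inner ℝ (f t) (gradient U (x t)) : ℝ))
      volume 0 (N*T) := (hfc.inner hgc).intervalIntegrable _ _
  have hj1 : IntervalIntegrable (fun t => (inner ℝ (mv M (deriv (deriv f) t)) (x t) : ℝ))
      volume 0 (N*T) := (cMf''.inner hxc).intervalIntegrable _ _
  have hj2 : IntervalIntegrable (fun t => (inner ℝ (mv C (deriv f t)) (x t) : ℝ))
      volume 0 (N*T) := (cCf'.inner hxc).intervalIntegrable _ _
  have hj3 : IntervalIntegrable (fun t => (inner ℝ (mv K (f t)) (x t) : ℝ))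
      volume 0 (N*T) := (cKf.inner hxc).intervalIntegrable _ _
  -- pointwise decomposition of ‖f t‖^2
  have key : ∀ t : ℝ, ‖f t‖ ^ 2
      = (inner ℝ (f t) (mv M (deriv (deriv x) t)) : ℝ)
        + inner ℝ (f t) (mv C (deriv x t)) + inner ℝ (f t) (mv K (x t))
        + inner ℝ (f t) (gradient U (x t)) := by
    intro t
    have hft : f t = mv M (deriv (deriv x) t) + mv C (deriv x t) + mv K (x t)
        + gradient U (x t) := by
      rw [hode t]; abel
    rw [← real_inner_self_eq_norm_sq]
    nth_rewrite 2 [hft]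
    rw [inner_add_right, inner_add_right, inner_add_right]
  -- Split the integral
  have hsplit : (∫ t in (0:ℝ)..(N * T), ‖f t‖ ^ 2)
      = (∫ t in (0:ℝ)..(N*T), (inner ℝ (f t) (mv M (deriv (deriv x) t)) : ℝ))
        + (∫ t in (0:ℝ)..(N*T), (inner ℝ (f t) (mv C (deriv x t)) : ℝ))
        + (∫ t in (0:ℝ)..(N*T), (inner ℝ (f t) (mv K (x t)) : ℝ))
        + (∫ t in (0:ℝ)..(N*T), (inner ℝ (f t) (gradient U (x t)) : ℝ)) := by
    rw [intervalIntegral.integral_congr (g := fun t =>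
      (inner ℝ (f t) (mv M (deriv (deriv x) t)) : ℝ)
        + inner ℝ (f t) (mv C (deriv x t)) + inner ℝ (f t) (mv K (x t))
        + inner ℝ (f t) (gradient U (x t))) (fun t _ => key t)]
    rw [intervalIntegral.integral_add ((hi1.add hi2).add hi3) hi4,
      intervalIntegral.integral_add (hi1.add hi2) hi3,
      intervalIntegral.integral_add hi1 hi2]
  -- integration by parts, term M
  have ib1 : (∫ t in (0:ℝ)..(N*T), (inner ℝ (deriv (fun s => mv M (f s)) t) (deriv x t) : ℝ))
      = - ∫ t in (0:ℝ)..(N*T), (inner ℝ (mv M (f t)) (deriv (deriv x) t) : ℝ) :=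
    ibp (N*T) _ _ (contDiff_mv M hf1) hx' (by rw [pf, px'])
  have rw1 : (∫ t in (0:ℝ)..(N*T), (inner ℝ (deriv (fun s => mv M (f s)) t) (deriv x t) : ℝ))
      = ∫ t in (0:ℝ)..(N*T), (inner ℝ (mv M (deriv f t)) (deriv x t) : ℝ) :=
    intervalIntegral.integral_congr (fun t _ => by rw [deriv_mv M hfd t])
  have ib2 : (∫ t in (0:ℝ)..(N*T), (inner ℝ (deriv (fun s => mv M (deriv f s)) t) (x t) : ℝ))
      = - ∫ t in (0:ℝ)..(N*T), (inner ℝ (mv M (deriv f t)) (deriv x t) : ℝ) :=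
    ibp (N*T) _ _ (contDiff_mv M hf') hx1 (by rw [pf', px])
  have rw2 : (∫ t in (0:ℝ)..(N*T), (inner ℝ (deriv (fun s => mv M (deriv f s)) t) (x t) : ℝ))
      = ∫ t in (0:ℝ)..(N*T), (inner ℝ (mv M (deriv (deriv f) t)) (x t) : ℝ) :=
    intervalIntegral.integral_congr (fun t _ => by rw [deriv_mv M hf'd t])
  have symM : (∫ t in (0:ℝ)..(N*T), (inner ℝ (f t) (mv M (deriv (deriv x) t)) : ℝ))
      = ∫ t in (0:ℝ)..(N*T), (inner ℝ (mv M (f t)) (deriv (deriv x) t) : ℝ) :=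
    intervalIntegral.integral_congr (fun t _ => (inner_mv_symm M hMs _ _).symm)
  have A1 : (∫ t in (0:ℝ)..(N*T), (inner ℝ (f t) (mv M (deriv (deriv x) t)) : ℝ))
      = ∫ t in (0:ℝ)..(N*T), (inner ℝ (mv M (deriv (deriv f) t)) (x t) : ℝ) := by
    rw [symM]; rw [rw1] at ib1; rw [rw2] at ib2; linarith
  -- integration by parts, term C
  have ib3 : (∫ t in (0:ℝ)..(N*T), (inner ℝ (deriv x t) (mv C (f t)) : ℝ))
      = - ∫ t in (0:ℝ)..(N*T), (inner ℝ (x t) (deriv (fun s => mv C (f s)) t) : ℝ) :=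
    ibp (N*T) _ _ hx1 (contDiff_mv C hf1) (by rw [pf, px])
  have rw3 : (∫ t in (0:ℝ)..(N*T), (inner ℝ (x t) (deriv (fun s => mv C (f s)) t) : ℝ))
      = ∫ t in (0:ℝ)..(N*T), (inner ℝ (mv C (deriv f t)) (x t) : ℝ) :=
    intervalIntegral.integral_congr (fun t _ => by
      rw [deriv_mv C hfd t, real_inner_comm])
  have symC : (∫ t in (0:ℝ)..(N*T), (inner ℝ (f t) (mv C (deriv x t)) : ℝ))
      = ∫ t in (0:ℝ)..(N*T), (inner ℝ (deriv x t) (mv C (f t)) : ℝ) :=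
    intervalIntegral.integral_congr (fun t _ => by
      rw [← inner_mv_symm C hCs, real_inner_comm])
  have A2 : (∫ t in (0:ℝ)..(N*T), (inner ℝ (f t) (mv C (deriv x t)) : ℝ))
      = - ∫ t in (0:ℝ)..(N*T), (inner ℝ (mv C (deriv f t)) (x t) : ℝ) := by
    rw [symC]; rw [rw3] at ib3; linarith
  -- term K
  have A3 : (∫ t in (0:ℝ)..(N*T), (inner ℝ (f t) (mv K (x t)) : ℝ))
      = ∫ t in (0:ℝ)..(N*T), (inner ℝ (mv K (f t)) (x t) : ℝ) :=
    intervalIntegral.integral_congr (fun t _ => (inner_mv_symm K hKs _ _).symm)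
  -- combine the three matrix terms and bound
  have B : (∫ t in (0:ℝ)..(N*T), (inner ℝ (mv M (deriv (deriv f) t)) (x t) : ℝ))
        - (∫ t in (0:ℝ)..(N*T), (inner ℝ (mv C (deriv f t)) (x t) : ℝ))
        + (∫ t in (0:ℝ)..(N*T), (inner ℝ (mv K (f t)) (x t) : ℝ))
      ≤ ∫ t in (0:ℝ)..(N * T),
          ‖mv M (deriv (deriv f) t) - mv C (deriv f t) + mv K (f t)‖ * ‖x t‖ := by
    have hcomb : (∫ t in (0:ℝ)..(N*T), (inner ℝ (mv M (deriv (deriv f) t)) (x t) : ℝ))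
        - (∫ t in (0:ℝ)..(N*T), (inner ℝ (mv C (deriv f t)) (x t) : ℝ))
        + (∫ t in (0:ℝ)..(N*T), (inner ℝ (mv K (f t)) (x t) : ℝ))
        = ∫ t in (0:ℝ)..(N*T),
            (inner ℝ (mv M (deriv (deriv f) t) - mv C (deriv f t) + mv K (f t)) (x t) : ℝ) := by
      rw [← intervalIntegral.integral_sub hj1 hj2,
        ← intervalIntegral.integral_add (hj1.sub hj2) hj3]
      exact intervalIntegral.integral_congr (fun t _ => by
        rw [inner_add_left, inner_sub_left])
    rw [hcomb]
    refine intervalIntegral.integral_mono_on hL0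
      ((((cMf''.sub cCf').add cKf).inner hxc).intervalIntegrable _ _)
      ((((cMf''.sub cCf').add cKf).norm.mul hxc.norm).intervalIntegrable _ _)
      (fun t _ => real_inner_le_norm _ _)
  -- gradient term bound
  have b4 : (∫ t in (0:ℝ)..(N*T), (inner ℝ (f t) (gradient U (x t)) : ℝ))
      ≤ U₀ * ∫ t in (0:ℝ)..(N * T), ‖f t‖ := by
    have hmono : (∫ t in (0:ℝ)..(N*T), (inner ℝ (f t) (gradient U (x t)) : ℝ))
        ≤ ∫ t in (0:ℝ)..(N*T), U₀ * ‖f t‖ := by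
      refine intervalIntegral.integral_mono_on hL0 hi4
        ((continuous_const.mul hfc.norm).intervalIntegrable _ _) (fun t _ => ?_)
      calc (inner ℝ (f t) (gradient U (x t)) : ℝ)
          ≤ ‖f t‖ * ‖gradient U (x t)‖ := real_inner_le_norm _ _
        _ ≤ ‖f t‖ * U₀ := mul_le_mul_of_nonneg_left (hU₀ t) (norm_nonneg _)
        _ = U₀ * ‖f t‖ := mul_comm _ _
    rwa [intervalIntegral.integral_const_mul] at hmono
  rw [hsplit, A1, A2, A3]
  linarith
end
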